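/- Under the standing setup, if there exists a positive integer ℓ such that no tree T_i contains a directed path of length ℓ, then there exists an infinite stable set S of D with |S ∩ V(T_i)| ≤ 1 for each i ≥ 1 such that the set of heads of all edges of T_1 ∪ T_2 ∪ ... whose tails lie in S is rich in D. -/

import Mathlib

attribute [local instance] Classical.propDecidable

set_option maxHeartbeats 1000000

noncomputable section

universe u

/-- A finite graph, possibly with loops and parallel edges. -/
structure MGraph : Type 1 where
  V : Type
  E : Type
  [fintypeV : Fintype V]
  [fintypeE : Fintype E]
  [decEqV : DecidableEq V]
  [decEqE : DecidableEq E]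
  ends : E → Sym2 V

attribute [instance] MGraph.fintypeV MGraph.fintypeE MGraph.decEqV MGraph.decEqE

namespace MGraph

variable {G : MGraph}

/-- A walk in a multigraph. -/
inductive Walk (G : MGraph) : G.V → G.V → Type where
  | nil (v : G.V) : Walk G v v
  | cons {u v w : G.V} (e : G.E) (he : G.ends e = s(u, v)) (p : Walk G v w) : Walk G u w

namespace Walk

def vertList : ∀ {u v : G.V}, G.Walk u v → List G.V
  | _, _, .nil v => [v]
  | u, _, .cons _ _ p => u :: p.vertList

def edgeList : ∀ {u v : G.V}, G.Walk u v → List G.E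
  | _, _, .nil _ => []
  | _, _, .cons e _ p => e :: p.edgeList

/-- A path is a walk with pairwise distinct vertices. -/
def IsPath {u v : G.V} (p : G.Walk u v) : Prop := p.vertList.Nodup

/-- A cycle is a nontrivial closed walk whose vertices are pairwise distinct except that
the first and the last vertex coincide, and whose edges are pairwise distinct. -/
def IsCycle {u v : G.V} (p : G.Walk u v) : Prop :=
  u = v ∧ p.edgeList ≠ [] ∧ p.edgeList.Nodup ∧ p.vertList.tail.Nodup

/-- The internal vertices of a walk. -/
def internalVerts {u v : G.V} (p : G.Walk u v) : List G.V := p.vertList.tail.dropLast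

end Walk

/-- A homeomorphic embedding from `H` to `G`: an injection on vertices together with
an assignment of paths (cycles, for loops) to the edges, internally disjoint from each other
and meeting the branch vertices only as prescribed. -/
structure HomEmb (H G : MGraph) where
  vmap : H.V → G.V
  vinj : Function.Injective vmap
  esrc : H.E → G.V
  etgt : H.E → G.V
  emap : ∀ e : H.E, G.Walk (esrc e) (etgt e)
  ends_eq : ∀ e : H.E, s(esrc e, etgt e) = (H.ends e).map vmap
  is_path : ∀ e : H.E, ¬ (H.ends e).IsDiag → (emap e).IsPath
  is_cycle : ∀ e : H.E, (H.ends e).IsDiag → (emap e).IsCycle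
  edge_disjoint : ∀ e₁ e₂ : H.E, e₁ ≠ e₂ → ∀ x : G.V,
    x ∈ (emap e₁).vertList → x ∈ (emap e₂).vertList →
    ∃ v : H.V, vmap v = x ∧ v ∈ H.ends e₁ ∧ v ∈ H.ends e₂
  vert_cond : ∀ (v : H.V) (e : H.E), vmap v ∈ (emap e).vertList → v ∈ H.ends e

/-- `G` contains `H` as a topological minor. -/
def TopMinor (H G : MGraph) : Prop := Nonempty (HomEmb H G)

/-- The subgraph of `G` induced by a set `S` of vertices. -/
def induce (G : MGraph) (S : Set G.V) : MGraph where
  V := S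
  E := {e : G.E // ∀ v ∈ G.ends e, v ∈ S}
  ends := fun e => (G.ends e.1).attachWith e.2

/-- A walk from `u` to `v` all whose vertices lie in `S` and all whose edges lie in `F`. -/
def ReachSub (G : MGraph) (S : Set G.V) (F : Set G.E) (u v : G.V) : Prop :=
  u ∈ S ∧ v ∈ S ∧ ∃ p : G.Walk u v, (∀ x ∈ p.vertList, x ∈ S) ∧ (∀ e ∈ p.edgeList, e ∈ F)

/-- `G` contains `H` as a minor: there are pairwise disjoint branch sets, connected via
a reserved set `F` of edges, and an injection of the edges of `H` into the non-reserved
edges of `G` joining the corresponding branch sets. -/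
def MinorOf (H G : MGraph) : Prop :=
  ∃ (Bset : H.V → Set G.V) (F : Set G.E) (π : H.E → G.E),
    (∀ v w : H.V, v ≠ w → Disjoint (Bset v) (Bset w)) ∧
    (∀ e ∈ F, ∃ v : H.V, ∀ x ∈ G.ends e, x ∈ Bset v) ∧
    (∀ v : H.V, (Bset v).Nonempty ∧ ∀ x ∈ Bset v, ∀ y ∈ Bset v, ReachSub G (Bset v) F x y) ∧
    Function.Injective π ∧ (∀ e, π e ∉ F) ∧
    (∀ (e : H.E) (u v : H.V), H.ends e = s(u, v) →
      ∃ x ∈ Bset u, ∃ y ∈ Bset v, G.ends (π e) = s(x, y))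

end MGraph

/-- The Robertson chain of length `k`: a path of length `k` with every edge duplicated. -/
def RobertsonChain (k : ℕ) : MGraph where
  V := Fin (k+1)
  E := Fin k × Fin 2
  ends := fun e => s(e.1.castSucc, e.1.succ)

/-- A drawing of a graph in the plane with no edge crossings: vertices are distinct points,
edges are arcs joining the points corresponding to their ends, the interior of an arc meets
no other arc and no vertex point. -/
structure PlaneDrawing (G : MGraph) where
  pos : G.V → ℝ × ℝ
  posInj : Function.Injective pos
  arc : G.E → ℝ → ℝ × ℝ
  arc_cont : ∀ e, ContinuousOn (arc e) (Set.Icc 0 1)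
  arc_ends : ∀ e, s(arc e 0, arc e 1) = (G.ends e).map pos
  arc_injOn : ∀ e, Set.InjOn (arc e) (Set.Ico 0 1)
  arc_avoid_vert : ∀ e, ∀ t ∈ Set.Ioo (0:ℝ) 1, ∀ v, arc e t ≠ pos v
  arc_no_cross : ∀ e₁ e₂, e₁ ≠ e₂ → ∀ t₁ ∈ Set.Ioo (0:ℝ) 1, ∀ t₂ ∈ Set.Icc (0:ℝ) 1,
    arc e₁ t₁ ≠ arc e₂ t₂

/-- A graph is planar if it can be embedded in the plane with no edge-crossing. -/
def MGraph.Planar (G : MGraph) : Prop := Nonempty (PlaneDrawing G)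

end

noncomputable section

namespace MGraph
variable (G : MGraph)

/-- A separation of `G`. -/
def IsSep (A B : Set G.V) : Prop :=
  A ∪ B = Set.univ ∧
  ∀ e : G.E, ¬ ((∃ u ∈ G.ends e, u ∈ A \ B) ∧ (∃ v ∈ G.ends e, v ∈ B \ A))

/-- The edges joining `v` to the set `S`. -/
def edgesFromTo (v : G.V) (S : Set G.V) : Set G.E := {e | ∃ u ∈ S, G.ends e = s(v, u)}

/-- `v ∈ A ∩ B` is pointed for `(A, B)`. -/
def Pointed (A B : Set G.V) (v : G.V) : Prop := (G.edgesFromTo v (A \ B)).ncard ≤ 1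

/-- `v ∈ A ∩ B` is anti-pointed for `(A, B)`. -/
def AntiPointed (A B : Set G.V) (v : G.V) : Prop := (G.edgesFromTo v (B \ A)).ncard ≤ 1

/-- A pseudo-edge-cut modulo `Z`. -/
def PseudoEC (A B : Set G.V) (Z : Set G.V) : Prop :=
  G.IsSep A B ∧ ∀ v ∈ (A ∩ B) \ Z, G.Pointed A B v

/-- The thickness of a separation. -/
def thickness (A B : Set G.V) : ℕ := {v | v ∈ A ∩ B ∧ ¬ G.Pointed A B v}.ncard

/-- The breadth of a separation. -/
def breadth (A B : Set G.V) : ℕ × ℕ := ((A ∩ B).ncard, G.thickness A B)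

/-- `(A, B)` separates `X` and `Y`. -/
def Separates (A B X Y : Set G.V) : Prop :=
  ¬ (X ⊆ A ∩ B ∧ Y ⊆ A ∩ B) ∧ ((X ⊆ A ∧ Y ⊆ B) ∨ (X ⊆ B ∧ Y ⊆ A))

/-- `(A, B)` strongly separates `U` and `W`. -/
def StronglySeparates (A B U W : Set G.V) : Prop :=
  U ⊆ A ∧ W ⊆ B ∧ ∀ x ∈ (A ∩ B) \ (U ∩ W), G.Pointed A B x ∧ x ∉ U

/-- There exist `n` pairwise disjoint paths in `G` from `X` to `Y`. -/
def LinkedSets (n : ℕ) (X Y : Set G.V) : Prop :=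
  ∃ (a b : Fin n → G.V) (P : ∀ i, G.Walk (a i) (b i)),
    (∀ i, (P i).IsPath) ∧ (∀ i, a i ∈ X) ∧ (∀ i, b i ∈ Y) ∧
    ∀ i j, i ≠ j → ∀ x, x ∈ (P i).vertList → x ∉ (P j).vertList

end MGraph

/-- `(A, B)` weakly separates `X` and `Y`. -/
def WeaklySeparates {α : Type} (A B X Y : Set α) : Prop :=
  (X ⊆ A ∧ Y ⊆ B) ∨ (X ⊆ B ∧ Y ⊆ A)

/-- Lexicographic comparison of breadths. -/
def breadthLE (p q : ℕ × ℕ) : Prop := p.1 < q.1 ∨ (p.1 = q.1 ∧ p.2 ≤ q.2)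

def breadthLT (p q : ℕ × ℕ) : Prop := p.1 < q.1 ∨ (p.1 = q.1 ∧ p.2 < q.2)

/-- `u` is an ancestor of `v` (in a rooted tree given by its parent function). -/
def IterAnc {τ : Type} (parent : τ → τ) (u v : τ) : Prop := ∃ n : ℕ, parent^[n] v = u

/-- `t` lies on the path of the tree between `t₁` and `t₂`. -/
def OnTreePathP {τ : Type} (parent : τ → τ) (t₁ t₂ t : τ) : Prop :=
  (IterAnc parent t t₁ ∨ IterAnc parent t t₂) ∧
  ∀ s, IterAnc parent s t₁ → IterAnc parent s t₂ → IterAnc parent s t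

/-- The edge of the rooted tree with head `v` lies on the directed path from `a` to `b`. -/
def EdgeOnPathP {τ : Type} (parent : τ → τ) (a b v : τ) : Prop :=
  IterAnc parent a v ∧ v ≠ a ∧ IterAnc parent v b

/-- Generic precursor relation. -/
def PrecursorP {τ X : Type} (parent : τ → τ) (bag : τ → Set X) (t₁ t₂ : τ) : Prop :=
  t₁ ≠ t₂ ∧ IterAnc parent t₁ t₂ ∧ (bag t₁).ncard = (bag t₂).ncard ∧
  ∀ t, IterAnc parent t₁ t → IterAnc parent t t₂ → (bag t₁).ncard ≤ (bag t).ncard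

/-- A tree-decomposition of a multigraph. -/
structure TreeDecompU (G : MGraph) where
  τ : Type
  [fτ : Fintype τ]
  [dτ : DecidableEq τ]
  [nτ : Nonempty τ]
  T : SimpleGraph τ
  tree : T.IsTree
  bag : τ → Set G.V
  covers : ∀ v : G.V, ∃ t, v ∈ bag t
  edge_bag : ∀ e : G.E, ∃ t, ∀ v ∈ G.ends e, v ∈ bag t
  bag_conn : ∀ v : G.V, ((SimpleGraph.induce {t | v ∈ bag t} T).Connected)

attribute [instance] TreeDecompU.fτ TreeDecompU.dτ TreeDecompU.nτ

/-- `G` has tree-width at most `w`. -/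
def MGraph.TreewidthLE (G : MGraph) (w : ℕ) : Prop :=
  ∃ D : TreeDecompU G, ∀ t, (D.bag t).ncard ≤ w + 1

/-- The tree-width of `G`. -/
def MGraph.tw (G : MGraph) : ℕ := sInf {w | G.TreewidthLE w}

/-- A rooted tree-decomposition of a multigraph, the rooted tree being given by its
parent function. -/
structure RootedTD (G : MGraph) where
  τ : Type
  [fτ : Fintype τ]
  [dτ : DecidableEq τ]
  root : τ
  parent : τ → τ
  parent_root : parent root = root
  reaches : ∀ t, ∃ n : ℕ, parent^[n] t = root
  bag : τ → Set G.V
  covers : ∀ v : G.V, ∃ t, v ∈ bag t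
  edge_bag : ∀ e : G.E, ∃ t, ∀ v ∈ G.ends e, v ∈ bag t
  bag_conn : ∀ (v : G.V) (t₁ t₂ t : τ), v ∈ bag t₁ → v ∈ bag t₂ →
    OnTreePathP parent t₁ t₂ t → v ∈ bag t

attribute [instance] RootedTD.fτ RootedTD.dτ

namespace RootedTD

variable {G : MGraph} (D : RootedTD G)

def Anc (t₁ t₂ : D.τ) : Prop := IterAnc D.parent t₁ t₂

/-- `↑t`. -/
def up (t : D.τ) : Set G.V := {v | ∃ s, IterAnc D.parent t s ∧ v ∈ D.bag s}

/-- `↓t`. -/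
def down (t : D.τ) : Set G.V :=
  {v | v ∈ D.bag t ∨ ∃ s, ¬ IterAnc D.parent t s ∧ v ∈ D.bag s}

def Precursor (t₁ t₂ : D.τ) : Prop := PrecursorP D.parent D.bag t₁ t₂

/-- The width of a rooted tree-decomposition. -/
def width : ℕ := (Finset.univ.sup fun t : D.τ => (D.bag t).ncard) - 1

/-- `c` is a child of `t`. -/
def ChildOf (c t : D.τ) : Prop := D.parent c = t ∧ c ≠ t

end RootedTD

/-- Generic notion of a `(Z, s)`-strip of length `h+1`, parametrized over the
pseudo-edge-cut predicate used for its third condition. -/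
def IsStripGen {τ : Type} {G : MGraph} (parent : τ → τ) (bag : τ → Set G.V)
    (PEC : τ → Prop) (Z : Set G.V) (s : ℕ) {h : ℕ} (t : Fin (h+1) → τ) : Prop :=
  (∀ i : Fin h, PrecursorP parent bag (t i.castSucc) (t i.succ)) ∧
  (∀ i, Z ⊆ bag (t i)) ∧
  (∀ i, (bag (t i) \ Z).ncard = s) ∧
  (∀ i, (bag (t i) \ Z).Nonempty) ∧
  (∀ i j, i ≠ j → Disjoint (bag (t i) \ Z) (bag (t j) \ Z)) ∧
  (∀ u, IterAnc parent (t 0) u → IterAnc parent u (t (Fin.last h)) →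
    (bag u).ncard = (bag (t 0)).ncard → ¬ PEC u) ∧
  G.LinkedSets (bag (t 0)).ncard (bag (t 0)) (bag (t (Fin.last h)))

namespace RootedTD

variable {G : MGraph} (D : RootedTD G)

/-- A `(Z, s)`-strip in a rooted tree-decomposition. -/
def IsStrip (Z : Set G.V) (s : ℕ) {h : ℕ} (t : Fin (h+1) → D.τ) : Prop :=
  IsStripGen D.parent D.bag (fun u => G.PseudoEC (D.down u) (D.up u) Z) Z s t

/-- A separation `(A, B)` `α`-breaks a strip. -/
def Breaks {h : ℕ} (t : Fin (h+1) → D.τ) (α : ℕ) (A B : Set G.V) : Prop :=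
  ∃ (ii jj : Fin α → Fin (h+1)) (hα : 0 < α), StrictMono ii ∧ StrictMono jj ∧
    (∀ a b, ii a < jj b) ∧
    D.down (t (ii ⟨α - 1, by omega⟩)) ⊆ A ∧ D.up (t (jj ⟨0, hα⟩)) ⊆ B

/-- `D` is `N`-linked. -/
def NLinked (N : ℕ) : Prop :=
  ∀ t₁ t₂ : D.τ, D.Precursor t₁ t₂ →
    N ≤ {v : G.V | v ∈ D.up t₂ ∧ ∀ u : D.τ, (D.bag u).ncard < (D.bag t₁).ncard →
          ¬ G.Separates (D.down u) (D.up u) (D.down t₁) {v}}.ncard →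
    ¬ ∃ A B : Set G.V, G.IsSep A B ∧ (A ∩ B).ncard < (D.bag t₁).ncard ∧
        D.down t₁ ⊆ A ∧ D.up t₂ ⊆ B

/-- The elevation of `D` is at most `d`. -/
def ElevationLE (d : ℕ) : Prop :=
  ∀ (Z : Set G.V) (s : ℕ), 0 < s → ∀ (h : ℕ) (t : Fin (h+1) → D.τ),
    D.IsStrip Z s t → h + 1 ≤ d

/-- A witness set for `(A, B)` being incorporated in `D` (conditions (INC1)-(INC3)). -/
def IncWitness (A B : Set G.V) (S : Finset D.τ) : Prop :=
  (∀ t ∈ S, breadthLE (G.breadth (D.down t) (D.up t)) (G.breadth A B)) ∧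
  (B = ⋃ t ∈ (S : Set D.τ), D.up t) ∧
  (∑ t ∈ S, 2 ^ ((D.down t ∩ D.up t).ncard ^ 2 + G.thickness (D.down t) (D.up t))
      ≤ 2 ^ ((A ∩ B).ncard ^ 2 + G.thickness A B))

/-- `(A, B)` is incorporated in `D`. -/
def Incorporated (A B : Set G.V) : Prop := ∃ S : Finset D.τ, D.IncWitness A B S

/-- `v ∈ X_{t₁} ∩ X_{t₂}` is coherent for `t₁, t₂`. -/
def Coherent (t₁ t₂ : D.τ) (v : G.V) : Prop :=
  (¬ G.Pointed (D.down t₁) (D.up t₁) v ∨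
    ∃ i : ℕ, i ≤ 1 ∧ (G.edgesFromTo v (D.down t₁ \ D.up t₁)).ncard = i ∧
      (G.edgesFromTo v (D.down t₂ \ D.up t₂)).ncard = i) ∧
  (¬ G.AntiPointed (D.down t₂) (D.up t₂) v ∨
    ∃ i : ℕ, i ≤ 1 ∧ (G.edgesFromTo v (D.up t₁ \ D.down t₁)).ncard = i ∧
      (G.edgesFromTo v (D.up t₂ \ D.down t₂)).ncard = i)

/-- `D` is `N`-integrated. -/
def NIntegrated (N : ℕ) : Prop :=
  ∀ t : Fin 4 → D.τ,
    (∀ i : Fin 3, D.Anc (t i.castSucc) (t i.succ)) →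
    (∀ i, (D.bag (t i)).ncard = (D.bag (t 0)).ncard) →
    G.LinkedSets (D.bag (t 0)).ncard (D.bag (t 0)) (D.bag (t 3)) →
    (∀ i j, i < j → D.bag (t i) ∩ D.bag (t j) = ⋂ ℓ, D.bag (t ℓ)) →
    (∀ v ∈ ⋂ ℓ, D.bag (t ℓ), D.Coherent (t 0) (t 3) v) →
    ∀ A B : Set G.V, G.IsSep A B →
      G.StronglySeparates A B (D.down (t 1)) (D.up (t 2)) →
      G.breadth A B = ((D.bag (t 1)).ncard,
        {v | v ∈ D.bag (t 0) ∩ D.bag (t 3) ∧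
             ¬ G.Pointed (D.down (t 3)) (D.up (t 3)) v}.ncard) →
      N ≤ {v : G.V | v ∈ D.up (t 3) ∧ ∀ u : D.τ,
            breadthLT (G.breadth (D.down u) (D.up u)) (G.breadth A B) →
            ¬ G.Separates (D.down u) (D.up u) (D.down (t 0)) {v}}.ncard →
      ∃ u : D.τ, D.Anc (t 0) u ∧ D.Anc u (t 3) ∧
        G.breadth (D.down u) (D.up u) = G.breadth A B

end RootedTD

/-- The number of separations of breadth `(i, j)` incorporated in `D`. -/
def sigCount {G : MGraph} (D : RootedTD G) (i j : ℕ) : ℕ :=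
  {p : Set G.V × Set G.V | G.IsSep p.1 p.2 ∧ G.breadth p.1 p.2 = (i, j) ∧
    D.Incorporated p.1 p.2}.ncard

/-- The signature of `D'` is greater than the signature of `D`. -/
def SigGreater {G : MGraph} (D D' : RootedTD G) : Prop :=
  ∃ i j : ℕ, j ≤ i ∧ i ≤ Fintype.card G.V ∧
    (∀ i' j' : ℕ, j' ≤ i' → (i' < i ∨ (i' = i ∧ j' < j)) →
      sigCount D i' j' = sigCount D' i' j') ∧
    sigCount D i j < sigCount D' i j

end
noncomputable section

/-- A subgraph of `G`, given by its vertex set and edge set. -/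
def SubPair (G : MGraph) : Type := Set G.V × Set G.E

/-- The component of the subgraph `(S, F)` containing `v`. -/
def componentSub (G : MGraph) (S : Set G.V) (F : Set G.E) (v : G.V) : SubPair G :=
  ({x | MGraph.ReachSub G S F v x}, {e | e ∈ F ∧ ∀ x ∈ G.ends e, MGraph.ReachSub G S F v x})

/-- The number of components of the subgraph `(S, F)`. -/
def numComp (G : MGraph) (S : Set G.V) (F : Set G.E) : ℕ :=
  {C : Set G.V | ∃ u ∈ S, C = {v | MGraph.ReachSub G S F u v}}.ncard

/-- `v` is a cut-vertex of the subgraph `(S, F)`. -/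
def IsCutVert (G : MGraph) (S : Set G.V) (F : Set G.E) (v : G.V) : Prop :=
  v ∈ S ∧ numComp G S F < numComp G (S \ {v}) F

def IsSubgraphOf (G : MGraph) (p q : SubPair G) : Prop := p.1 ⊆ q.1 ∧ p.2 ⊆ q.2

def EdgeClosed (G : MGraph) (p : SubPair G) : Prop := ∀ e ∈ p.2, ∀ v ∈ G.ends e, v ∈ p.1

def ConnectedSub (G : MGraph) (p : SubPair G) : Prop :=
  p.1.Nonempty ∧ ∀ u ∈ p.1, ∀ v ∈ p.1, MGraph.ReachSub G p.1 p.2 u v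

/-- A block of the subgraph `(S, F)`: a maximal connected subgraph with no cut-vertex. -/
def IsBlock (G : MGraph) (S : Set G.V) (F : Set G.E) (b : SubPair G) : Prop :=
  IsSubgraphOf G b (S, F) ∧ EdgeClosed G b ∧ ConnectedSub G b ∧
  (∀ v, ¬ IsCutVert G b.1 b.2 v) ∧
  ∀ b' : SubPair G, IsSubgraphOf G b' (S, F) → EdgeClosed G b' → ConnectedSub G b' →
    (∀ v, ¬ IsCutVert G b'.1 b'.2 v) → IsSubgraphOf G b b' → b = b'

/-- Adjacency of the block-cutvertex incidence graph of the subgraph `(S, F)`. -/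
def bcAdj (G : MGraph) (S : Set G.V) (F : Set G.E) :
    (SubPair G ⊕ G.V) → (SubPair G ⊕ G.V) → Prop
  | Sum.inl b, Sum.inr v => IsBlock G S F b ∧ IsCutVert G S F v ∧ v ∈ b.1
  | Sum.inr v, Sum.inl b => IsBlock G S F b ∧ IsCutVert G S F v ∧ v ∈ b.1
  | _, _ => False

/-- The block-cutvertex incidence graph (whose "block tree" components realize the
block trees of the components of `(S, F)`). -/
def bcGraph (G : MGraph) (S : Set G.V) (F : Set G.E) : SimpleGraph (SubPair G ⊕ G.V) where
  Adj := bcAdj G S F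
  symm := by
    constructor
    intro x y h
    cases x <;> cases y <;> simp_all [bcAdj]
  loopless := by
    constructor
    intro x h
    cases x <;> simp_all [bcAdj]

/-- The block `B` lies on the block-tree path between the blocks `B₁` and `B₂`. -/
def OnBlockPath (G : MGraph) (S : Set G.V) (F : Set G.E) (B₁ B₂ B : SubPair G) : Prop :=
  IsBlock G S F B ∧
  Nonempty ((bcGraph G S F).Walk (Sum.inl B₁) (Sum.inl B₂)) ∧
  ∀ p : (bcGraph G S F).Walk (Sum.inl B₁) (Sum.inl B₂), Sum.inl B ∈ p.support

/-- The graph that is the path of blocks of `(S, F)` from `B₁` to `B₂`. -/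
def pathOfBlocks (G : MGraph) (S : Set G.V) (F : Set G.E) (B₁ B₂ : SubPair G) : SubPair G :=
  ({v | ∃ B, OnBlockPath G S F B₁ B₂ B ∧ v ∈ B.1},
   {e | ∃ B, OnBlockPath G S F B₁ B₂ B ∧ e ∈ B.2})

/-- The block of `(S, F)` containing an edge of `E₀`. -/
def blockThrough (G : MGraph) (S : Set G.V) (F : Set G.E) (E₀ : Set G.E) : SubPair G :=
  ({v | ∃ B, IsBlock G S F B ∧ (∃ e ∈ E₀, e ∈ B.2) ∧ v ∈ B.1},
   {e' | ∃ B, IsBlock G S F B ∧ (∃ e ∈ E₀, e ∈ B.2) ∧ e' ∈ B.2})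

/-- A family of `n` walks in `G`. -/
structure PathFamily (G : MGraph) (n : ℕ) where
  a : Fin n → G.V
  b : Fin n → G.V
  P : ∀ i, G.Walk (a i) (b i)

namespace PathFamily

variable {G : MGraph} {n : ℕ}

/-- The vertices of the members other than the `i₀`-th one. -/
def others (Fam : PathFamily G n) (i₀ : Fin n) : Set G.V :=
  {x | ∃ j, j ≠ i₀ ∧ x ∈ (Fam.P j).vertList}

/-- The vertices of all members. -/
def allVerts (Fam : PathFamily G n) : Set G.V := {x | ∃ j, x ∈ (Fam.P j).vertList}

end PathFamily

/-- The data of the segment of the member `P i₀` of a path family between two of its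
vertices `v₁, v₂`; its first and last edges are "the edges of `P` incident with
`v₁` and `v₂`" used in the definition of the graphs `Q`, `L` and `R`. -/
structure SegConfig (G : MGraph) {n : ℕ} (Fam : PathFamily G n) (i₀ : Fin n)
    (v₁ v₂ : G.V) where
  seg : G.Walk v₁ v₂
  sub_v : seg.vertList.IsInfix (Fam.P i₀).vertList
  sub_e : seg.edgeList.IsInfix (Fam.P i₀).edgeList
  nontriv : seg.edgeList ≠ []

namespace SegConfig

variable {G : MGraph} {n : ℕ} {Fam : PathFamily G n} {i₀ : Fin n} {v₁ v₂ : G.V}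

/-- The vertex set of `G − ⋃_{W ∈ 𝒫 − {P}} V(W)`. -/
def delS (_ : SegConfig G Fam i₀ v₁ v₂) : Set G.V := Set.univ \ Fam.others i₀

/-- The edge set of `G − ⋃_{W ∈ 𝒫 − {P}} V(W)`. -/
def delF (cfg : SegConfig G Fam i₀ v₁ v₂) : Set G.E :=
  {e | ∀ x ∈ G.ends e, x ∈ cfg.delS}

/-- The block `B₁` containing the edge of `P` incident with `v₁`. -/
def B1 (cfg : SegConfig G Fam i₀ v₁ v₂) : SubPair G :=
  blockThrough G cfg.delS cfg.delF {e | cfg.seg.edgeList.head? = some e}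

/-- The block `B₂` containing the edge of `P` incident with `v₂`. -/
def B2 (cfg : SegConfig G Fam i₀ v₁ v₂) : SubPair G :=
  blockThrough G cfg.delS cfg.delF {e | cfg.seg.edgeList.getLast? = some e}

/-- The `(Q, 𝒫, P)`-graph. -/
def Qgraph (cfg : SegConfig G Fam i₀ v₁ v₂) : SubPair G :=
  pathOfBlocks G cfg.delS cfg.delF cfg.B1 cfg.B2

/-- The edges of the single-edge blocks of the path of blocks. -/
def singles (cfg : SegConfig G Fam i₀ v₁ v₂) : Set G.E :=
  {e' | ∃ B, OnBlockPath G cfg.delS cfg.delF cfg.B1 cfg.B2 B ∧ (∃ e₀, B.2 = {e₀}) ∧ e' ∈ B.2}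

/-- The `(L, 𝒫, P)`-graph. -/
def Lgraph (cfg : SegConfig G Fam i₀ v₁ v₂) : SubPair G :=
  if ∀ B, OnBlockPath G cfg.delS cfg.delF cfg.B1 cfg.B2 B → ¬ ∃ e₀, B.2 = {e₀}
  then cfg.Qgraph
  else componentSub G cfg.Qgraph.1 (cfg.Qgraph.2 \ cfg.singles) v₁

/-- The `(R, 𝒫, P)`-graph. -/
def Rgraph (cfg : SegConfig G Fam i₀ v₁ v₂) : SubPair G :=
  if ∀ B, OnBlockPath G cfg.delS cfg.delF cfg.B1 cfg.B2 B → ¬ ∃ e₀, B.2 = {e₀}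
  then cfg.Qgraph
  else componentSub G cfg.Qgraph.1 (cfg.Qgraph.2 \ cfg.singles) v₂

end SegConfig

/-- Two edge-disjoint paths from `x` to `y` avoiding `avoid` and internally
disjoint from `intAvoid`. -/
def TwoEdgeDisjointPaths (G : MGraph) (x y : G.V) (avoid intAvoid : Set G.V) : Prop :=
  ∃ (p q : G.Walk x y), p.IsPath ∧ q.IsPath ∧
    (∀ z ∈ p.vertList, z ∉ avoid) ∧ (∀ z ∈ q.vertList, z ∉ avoid) ∧
    (∀ z ∈ p.internalVerts, z ∉ intAvoid) ∧ (∀ z ∈ q.internalVerts, z ∉ intAvoid) ∧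
    ∀ e ∈ p.edgeList, e ∉ q.edgeList

section TreeSets

/-- `s` is an internal node of the path between `t₁` and `t₂`. -/
def interiorNodeU {G : MGraph} (D : TreeDecompU G) (t₁ t₂ s : D.τ) : Prop :=
  s ≠ t₁ ∧ s ≠ t₂ ∧ ∀ p : D.T.Walk t₁ t₂, s ∈ p.support

/-- reachability in the tree avoiding the set `R`. -/
def reachAvoidU {G : MGraph} (D : TreeDecompU G) (R : Set D.τ) (a b : D.τ) : Prop :=
  a ∉ R ∧ b ∉ R ∧ ∃ p : D.T.Walk a b, ∀ x ∈ p.support, x ∉ R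

/-- The vertex set of the graph `G'` used for jumps: the subgraph induced by
`X_{t₁} ∪ X_{t₂}` together with the bags of the component of `T − {t₁, t₂}`
containing an internal node of the `t₁`–`t₂` path. -/
def GsetU {G : MGraph} (D : TreeDecompU G) (t₁ t₂ : D.τ) : Set G.V :=
  D.bag t₁ ∪ D.bag t₂ ∪
  {v | ∃ u s, interiorNodeU D t₁ t₂ s ∧ reachAvoidU D {t₁, t₂} s u ∧ v ∈ D.bag u}

/-- reachability in the underlying tree of a rooted tree, avoiding the set `R`. -/
def rReachAvoid {τ : Type} (parent : τ → τ) (R : Set τ) (a b : τ) : Prop :=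
  a ∉ R ∧ b ∉ R ∧
  Relation.ReflTransGen
    (fun x y => x ∉ R ∧ y ∉ R ∧ x ≠ y ∧ (parent x = y ∨ parent y = x)) a b

/-- The vertex set of the graph `G'` used for parent-side and child-side jumps. -/
def GsetR {G : MGraph} (D : RootedTD G) (t' t : D.τ) : Set G.V :=
  D.bag t' ∪ D.bag t ∪
  {v | ∃ u s, OnTreePathP D.parent t' t s ∧ s ≠ t' ∧ s ≠ t ∧
        rReachAvoid D.parent {t', t} s u ∧ v ∈ D.bag u}

end TreeSets

/-- A right jump from `v₁` (with respect to a path family `𝒫`, a member `P i₀` and the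
segment configuration between `X_{t₁}` and `X_{t₂}`). -/
def RightJumpU {G : MGraph} (D : TreeDecompU G) (t₁ t₂ : D.τ) {n : ℕ}
    (Fam : PathFamily G n) (i₀ : Fin n) {v₁ v₂ : G.V}
    (cfg : SegConfig G Fam i₀ v₁ v₂) {x y : G.V} (p : G.Walk x y) : Prop :=
  p.IsPath ∧ (∀ z ∈ p.vertList, z ∈ GsetU D t₁ t₂) ∧
  x ∈ cfg.Lgraph.1 ∧ y ∈ Fam.others i₀ ∧
  ∀ z ∈ p.internalVerts, z ∉ cfg.Lgraph.1 ∧ z ∉ Fam.allVerts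

/-- A left jump from `v₂`. -/
def LeftJumpU {G : MGraph} (D : TreeDecompU G) (t₁ t₂ : D.τ) {n : ℕ}
    (Fam : PathFamily G n) (i₀ : Fin n) {v₁ v₂ : G.V}
    (cfg : SegConfig G Fam i₀ v₁ v₂) {x y : G.V} (p : G.Walk x y) : Prop :=
  p.IsPath ∧ (∀ z ∈ p.vertList, z ∈ GsetU D t₁ t₂) ∧
  x ∈ cfg.Rgraph.1 ∧ y ∈ Fam.others i₀ ∧
  ∀ z ∈ p.internalVerts, z ∉ cfg.Rgraph.1 ∧ z ∉ Fam.allVerts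

/-- A parent-side jump at `t` with respect to `t'`. -/
def ParentJump {G : MGraph} (D : RootedTD G) (t' t : D.τ) {n : ℕ}
    (Fam : PathFamily G n) (i₀ : Fin n) {v₁ v₂ : G.V}
    (cfg : SegConfig G Fam i₀ v₁ v₂) {x y : G.V} (p : G.Walk x y) : Prop :=
  p.IsPath ∧ (∀ z ∈ p.vertList, z ∈ GsetR D t' t) ∧
  x ∈ cfg.Rgraph.1 ∧ y ∈ Fam.others i₀ ∧ y ∉ D.bag t' ∩ D.bag t ∧
  ∀ z ∈ p.internalVerts, z ∉ cfg.Rgraph.1 ∧ z ∉ Fam.allVerts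

/-- A child-side jump at `t'` with respect to `t`. -/
def ChildJump {G : MGraph} (D : RootedTD G) (t' t : D.τ) {n : ℕ}
    (Fam : PathFamily G n) (i₀ : Fin n) {v₁ v₂ : G.V}
    (cfg : SegConfig G Fam i₀ v₁ v₂) {x y : G.V} (p : G.Walk x y) : Prop :=
  p.IsPath ∧ (∀ z ∈ p.vertList, z ∈ GsetR D t' t) ∧
  x ∈ cfg.Lgraph.1 ∧ y ∈ Fam.others i₀ ∧ y ∉ D.bag t' ∩ D.bag t ∧
  ∀ z ∈ p.internalVerts, z ∉ cfg.Lgraph.1 ∧ z ∉ Fam.allVerts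

end
noncomputable section

/-- A quasi-order: a set with a reflexive and transitive relation. -/
structure QuasiOrder : Type 1 where
  carrier : Type
  le : carrier → carrier → Prop
  refl : ∀ a, le a a
  trans : ∀ a b c, le a b → le b c → le a c

/-- A quasi-order is a well-quasi-order if every infinite sequence has a
nondecreasing pair. -/
def QuasiOrder.IsWQO (Q : QuasiOrder) : Prop :=
  ∀ f : ℕ → Q.carrier, ∃ i j : ℕ, i < j ∧ Q.le (f i) (f j)

/-- A finite rooted tree, given by its parent function. -/
structure RTree : Type 1 where
  V : Type
  [fv : Fintype V]
  [dv : DecidableEq V]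
  root : V
  parent : V → V
  parent_root : parent root = root
  reaches : ∀ v, ∃ n : ℕ, parent^[n] v = root

attribute [instance] RTree.fv RTree.dv

namespace RTree

/-- We identify an edge of a rooted tree with its head (a non-root node);
`EBefore v w` says that the edge with head `v` strictly precedes the edge with head `w`
on a directed path. -/
def EBefore (T : RTree) (v w : T.V) : Prop :=
  v ≠ T.root ∧ w ≠ T.root ∧ IterAnc T.parent v (T.parent w)

/-- The edge with head `v` lies on the directed path from `a` to `b`. -/
def EOnPath (T : RTree) (a b v : T.V) : Prop :=
  v ≠ T.root ∧ IterAnc T.parent a v ∧ v ≠ a ∧ IterAnc T.parent v b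

/-- There is a directed path of length `ℓ` in `T`. -/
def HasDirPathLen (T : RTree) (ℓ : ℕ) : Prop :=
  ∃ a b : T.V, (T.parent)^[ℓ] b = a ∧ ∀ j < ℓ, (T.parent)^[j] b ≠ a

end RTree

/-- `v` precedes `w` in `T` with respect to `(φ, τ, μ)` (functions on edges being
identified with functions on non-root nodes via heads). -/
def Precedes {L : Type} (T : RTree) (φ τm : T.V → Finset L) (μ : T.V → ℕ)
    (v w : T.V) : Prop :=
  v ≠ T.root ∧ w ≠ T.root ∧ IterAnc T.parent v w ∧
  (φ v).card = (φ w).card ∧ τm v = τm w ∧ μ v = μ w ∧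
  (∀ g, T.EOnPath v w g → (φ w).card ≤ (φ g).card) ∧
  (∀ g, T.EOnPath v w g → (φ g).card = (φ v).card → μ v ≤ μ g)

/-- `(T, φ, τ, μ)` is `(n, m, N)`-decorated. -/
def Decorated {L : Type} (T : RTree) (φ τm : T.V → Finset L) (μ : T.V → ℕ)
    (n m N : ℕ) : Prop :=
  (∀ v : T.V, v ≠ T.root → (φ v).card ≤ n ∧ τm v ⊆ φ v ∧ μ v ≤ N) ∧
  (∀ e e' e'' : T.V, T.EBefore e e' → T.EBefore e' e'' → φ e ∩ φ e'' ⊆ φ e') ∧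
  (∀ (t : ℕ) (ht : 0 < t) (a b : T.V), IterAnc T.parent a b →
    ∀ es : Fin t → T.V,
      (∀ i, T.EOnPath a b (es i)) →
      (∀ i j : Fin t, i < j → T.EBefore (es i) (es j)) →
      (∀ i, (φ (es i)).card = (φ (es ⟨0, ht⟩)).card) →
      ∀ Z : Finset L, (∀ i j, i ≠ j → φ (es i) ∩ φ (es j) = Z) →
      (∀ e, T.EOnPath a b e → (φ (es ⟨0, ht⟩)).card ≤ (φ e).card) →
      (∀ e, T.EOnPath a b e → (φ e).card = (φ (es ⟨0, ht⟩)).card →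
        ¬ τm e ⊆ Z ∧ μ e = μ (es ⟨0, ht⟩)) →
      t ≤ m)

/-- A stable set in a (possibly infinite) graph. -/
def StableIn {V : Type} (D : SimpleGraph V) (S : Set V) : Prop :=
  ∀ x ∈ S, ∀ y ∈ S, ¬ D.Adj x y

/-- A set of vertices of an infinite graph is rich if no infinite subset of it is stable. -/
def RichIn {V : Type} (D : SimpleGraph V) (I : Set V) : Prop :=
  ∀ J : Set V, J ⊆ I → J.Infinite → ¬ StableIn D J

end
noncomputable section

universe u

/-- A march in `G`: a sequence of distinct vertices, each entry carrying an
essential number in `{0, 1, 2}`. -/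
def March (G : MGraph) : Type := {l : List (G.V × Fin 3) // (l.map Prod.fst).Nodup}

/-- The rooted extension of the rooted graph `(G, γ)`. -/
def MGraph.rext (G : MGraph) (γ : March G) : MGraph where
  V := G.V ⊕ Fin γ.1.length
  E := G.E ⊕ (Σ i : Fin γ.1.length, Fin ((γ.1.get i).2 : ℕ))
  ends := fun e =>
    match e with
    | Sum.inl e => (G.ends e).map Sum.inl
    | Sum.inr x => s(Sum.inl (γ.1.get x.1).1, Sum.inr x.1)

/-- A homeomorphic embedding between rooted graphs. -/
structure RHom (G₁ G₂ : MGraph) (γ₁ : March G₁) (γ₂ : March G₂) where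
  hlen : γ₁.1.length = γ₂.1.length
  emb : MGraph.HomEmb (G₁.rext γ₁) (G₂.rext γ₂)
  ind : ∀ i : Fin γ₁.1.length,
    emb.vmap (Sum.inr i) = Sum.inr (Fin.cast hlen i)
  int_cond : ∀ (i : Fin γ₂.1.length) (e : (G₁.rext γ₁).E),
    (Sum.inl (γ₂.1.get i).1 : (G₂.rext γ₂).V) ∈ (emb.emap e).internalVerts →
    ((Sum.inr (Fin.cast hlen.symm i) : (G₁.rext γ₁).V) ∈ (G₁.rext γ₁).ends e ∨
     ((γ₁.1.get (Fin.cast hlen.symm i)).2 = 0 ∧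
      (Sum.inl (γ₁.1.get (Fin.cast hlen.symm i)).1 : (G₁.rext γ₁).V) ∈ (G₁.rext γ₁).ends e))
  pre_cond : ∀ (i : Fin γ₂.1.length) (v : (G₁.rext γ₁).V),
    emb.vmap v = Sum.inl (γ₂.1.get i).1 → v = Sum.inl (γ₁.1.get (Fin.cast hlen.symm i)).1

/-- A `Q`-assemblage: a rooted graph, a finite (indexed) multiset of marches,
a `Q`-label for each march and a `Q`-label for each vertex. -/
structure QA (Q : Type u) (le : Q → Q → Prop) : Type (max 1 u) where
  G : MGraph
  γ0 : March G
  ι : Type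
  [fι : Fintype ι]
  mar : ι → March G
  lab : ι → Q
  φ : G.V → Q

attribute [instance] QA.fι

/-- Simulation of `Q`-assemblages. -/
def Sim {Q : Type u} (le : Q → Q → Prop) (S S' : QA Q le) : Prop :=
  ∃ (η : RHom S.G S'.G S.γ0 S'.γ0) (j : S.ι → S'.ι),
    Function.Injective j ∧
    (∀ v : S.G.V, ∃ v' : S'.G.V,
      η.emb.vmap (Sum.inl v) = Sum.inl v' ∧ le (S.φ v) (S'.φ v')) ∧
    (∀ i, le (S.lab i) (S'.lab (j i))) ∧
    ∀ i, ((S.mar i).1.map fun p => η.emb.vmap (Sum.inl p.1)) =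
         ((S'.mar (j i)).1.map fun p => (Sum.inl p.1 : (S'.G.rext S'.γ0).V))

/-- An assemblage (the underlying assemblage of a `Q`-assemblage). -/
structure Asmb : Type 1 where
  G : MGraph
  γ0 : March G
  ι : Type
  [fι : Fintype ι]
  mar : ι → March G

attribute [instance] Asmb.fι

/-- The underlying assemblage. -/
def QA.und {Q : Type u} {le : Q → Q → Prop} (S : QA Q le) : Asmb :=
  { G := S.G, γ0 := S.γ0, ι := S.ι, mar := S.mar }

/-- `le` is a well-quasi-ordering of `Q`. -/
def IsWQORel {Q : Type u} (le : Q → Q → Prop) : Prop :=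
  (∀ a, le a a) ∧ (∀ a b c, le a b → le b c → le a c) ∧
  ∀ f : ℕ → Q, ∃ i j : ℕ, i < j ∧ le (f i) (f j)

/-- A set of assemblages is well-behaved. -/
def WellBehaved (F : Set Asmb) : Prop :=
  ∀ (Q : Type) (le : Q → Q → Prop), IsWQORel le →
    ∀ S : ℕ → QA Q le, (∀ i, (S i).und ∈ F) →
    ∃ i i' : ℕ, i < i' ∧ Sim le (S i) (S i')

/-- A rooted tree-decomposition of an assemblage. -/
structure ATD (A : Asmb) where
  D : RootedTD A.G
  root_bag : ∀ p ∈ A.γ0.1, p.1 ∈ D.bag D.root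
  α : A.ι → D.τ
  mar_bag : ∀ i : A.ι, ∀ p ∈ (A.mar i).1, p.1 ∈ D.bag (α i)

/-- The adhesion of a rooted tree-decomposition of an assemblage is at most `h`. -/
def AdhesionLE (A : Asmb) (T : ATD A) (h : ℕ) : Prop :=
  ∀ t : T.D.τ, t ≠ T.D.root → (T.D.bag t ∩ T.D.bag (T.D.parent t)).ncard ≤ h

/-- The essential number of the vertex `v` in the root march `γ_t` of the branch at `t`. -/
def essNum (A : Asmb) (T : ATD A) (t : T.D.τ) (v : A.G.V) : Fin 3 :=
  if (∀ i : A.ι, ¬ IterAnc T.D.parent t (T.α i) → ∀ p ∈ (A.mar i).1, p.1 ≠ v) ∧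
     (A.G.edgesFromTo v (Set.univ \ T.D.up t)).ncard = 0 ∧
     (∀ p ∈ A.γ0.1, p.1 = v → p.2 = 0)
  then 0
  else if (∀ i : A.ι, ¬ IterAnc T.D.parent t (T.α i) → ∀ p ∈ (A.mar i).1, p.1 ≠ v) ∧
     (((A.G.edgesFromTo v (Set.univ \ T.D.up t)).ncard = 1 ∧
        (∀ p ∈ A.γ0.1, p.1 = v → p.2 = 0)) ∨
      ((A.G.edgesFromTo v (Set.univ \ T.D.up t)).ncard = 0 ∧
        ∃ p ∈ A.γ0.1, p.1 = v ∧ p.2 = 1))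
  then 1 else 2

/-- The list of vertex/essential-number pairs of the march `γ_t`, with respect to
an ordering list `l` of `X_t ∩ X_{parent t}`. -/
def gammaList (A : Asmb) (T : ATD A) (t : T.D.τ) (l : List A.G.V) :
    List (A.G.V × Fin 3) :=
  l.map fun v => (v, essNum A T t v)

theorem gammaList_fst (A : Asmb) (T : ATD A) (t : T.D.τ) (l : List A.G.V) :
    (gammaList A T t l).map Prod.fst = l := by
  simp only [gammaList, List.map_map]
  exact List.map_congr_left (fun a _ => rfl) |>.trans (List.map_id _)

/-- `l` is an ordering of (an enumeration of) the finite set `X`. -/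
def IsOrdering {γ : Type} (l : List γ) (X : Set γ) : Prop :=
  l.Nodup ∧ ∀ v, v ∈ l ↔ v ∈ X

theorem coerce_nodup {G : MGraph} (S : Set G.V) :
    ∀ (l : List (G.V × Fin 3)) (H : ∀ p ∈ l, p.1 ∈ S),
      (l.map Prod.fst).Nodup →
      ((l.pmap (fun (p : G.V × Fin 3) (hp : p.1 ∈ S) => ((⟨p.1, hp⟩ : S), p.2)) H).map
        Prod.fst).Nodup := by
  intro l
  induction l with
  | nil => intro H h; simp [List.pmap]
  | cons a l ih =>
      intro H h
      simp only [List.map_cons, List.nodup_cons, List.pmap] at h ⊢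
      constructor
      · intro hmem
        simp only [List.mem_map, List.mem_pmap] at hmem
        obtain ⟨q, ⟨p, hp, rfl⟩, hval⟩ := hmem
        have h1 : p.1 = a.1 := congrArg Subtype.val hval
        exact h.1 (h1 ▸ List.mem_map_of_mem (f := Prod.fst) hp)
      · exact ih _ h.2

/-- Reinterpret a list of vertex/essential-number pairs as a march of an induced
subgraph. -/
def coerceMarch {G : MGraph} (S : Set G.V) (l : List (G.V × Fin 3))
    (hm : ∀ p ∈ l, p.1 ∈ S) (hnd : (l.map Prod.fst).Nodup) : March (G.induce S) :=
  ⟨l.pmap (fun (p : G.V × Fin 3) (hp : p.1 ∈ S) => ((⟨p.1, hp⟩ : S), p.2)) hm,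
    coerce_nodup S l hm hnd⟩

/-- The `(f, φ)`-branch of a rooted tree-decomposition of a `Q`-assemblage at a node `c`,
with respect to an ordering list `l` of `X_c ∩ X_{parent c}`. -/
def branchQA {Q : Type u} {le : Q → Q → Prop} (S : QA Q le) (T : ATD S.und) (c : T.D.τ)
    (l : List S.G.V) (hl : ∀ v ∈ l, v ∈ T.D.bag c) (hnd : l.Nodup) : QA Q le where
  G := S.G.induce (T.D.up c)
  γ0 := coerceMarch (T.D.up c) (gammaList S.und T c l)
    (by
      intro p hp
      simp only [gammaList] at hp
      obtain ⟨v, hv, rfl⟩ := List.mem_map.1 hp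
      exact ⟨c, ⟨0, rfl⟩, hl v hv⟩)
    (by exact (congrArg List.Nodup (gammaList_fst S.und T c l)).mpr hnd)
  ι := {i : S.ι // IterAnc T.D.parent c (T.α i)}
  mar := fun i => coerceMarch (T.D.up c) (S.mar i.1).1
    (fun p hp => ⟨T.α i.1, i.2, T.mar_bag i.1 p hp⟩)
    (S.mar i.1).2
  lab := fun i => S.lab i.1
  φ := fun v => S.φ v.1

/-- The sequence `b_c` associated with a child `c` (with respect to an ordering
list `l` of `X_c ∩ X_{parent c}`). -/
def bseq (A : Asmb) (T : ATD A) (c : T.D.τ) (l : List A.G.V) : List Bool :=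
  l.map fun v =>
    if ∃ e : A.G.E, ∃ u, u ∈ T.D.up c ∧ u ∉ T.D.bag c ∩ T.D.bag (T.D.parent c) ∧
        A.G.ends e = s(v, u)
    then true else false

/-- The underlying assemblage of the encoding of a rooted tree-decomposition of an
assemblage at a node `t`. -/
def encU (A : Asmb) (T : ATD A) (t : T.D.τ)
    (lt : List A.G.V)
    (hlt : t ≠ T.D.root → IsOrdering lt (T.D.bag t ∩ T.D.bag (T.D.parent t)))
    (lc : T.D.τ → List A.G.V)
    (hlc : ∀ c, T.D.ChildOf c t → IsOrdering (lc c) (T.D.bag c ∩ T.D.bag t)) : Asmb where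
  G := A.G.induce (T.D.bag t)
  γ0 :=
    if h : t = T.D.root
    then coerceMarch (T.D.bag t) A.γ0.1 (fun p hp => by rw [h]; exact T.root_bag p hp)
      A.γ0.2
    else coerceMarch (T.D.bag t) (gammaList A T t lt)
      (by
        intro p hp
        simp only [gammaList, List.mem_map] at hp
        obtain ⟨v, hv, rfl⟩ := hp
        exact (((hlt h).2 v).mp hv).1)
      (by rw [gammaList_fst]; exact (hlt h).1)
  ι := {c : T.D.τ // T.D.ChildOf c t} ⊕ {i : A.ι // T.α i = t}
  mar := fun x =>
    match x with
    | Sum.inl c => coerceMarch (T.D.bag t) (gammaList A T c.1 (lc c.1))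
        (by
          intro p hp
          simp only [gammaList, List.mem_map] at hp
          obtain ⟨v, hv, rfl⟩ := hp
          exact (((hlc c.1 c.2).2 v).mp hv).2)
        (by rw [gammaList_fst]; exact (hlc c.1 c.2).1)
    | Sum.inr i => coerceMarch (T.D.bag t) (A.mar i.1).1
        (fun p hp => by rw [← i.2]; exact T.mar_bag i.1 p hp)
        (A.mar i.1).2

/-- The order relation on the labels of an encoding: the disjoint union of `le` with
(simulation × equality). -/
def encRel {Q : Type u} (le : Q → Q → Prop) :
    (Q ⊕ (QA Q le × List Bool)) → (Q ⊕ (QA Q le × List Bool)) → Prop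
  | Sum.inl a, Sum.inl b => le a b
  | Sum.inr a, Sum.inr b => Sim le a.1 b.1 ∧ a.2 = b.2
  | _, _ => False

/-- The encoding of a rooted tree-decomposition of a `Q`-assemblage at a node `t`. -/
def encQ {Q : Type u} {le : Q → Q → Prop} (S : QA Q le) (T : ATD S.und) (t : T.D.τ)
    (lt : List S.G.V)
    (hlt : t ≠ T.D.root → IsOrdering lt (T.D.bag t ∩ T.D.bag (T.D.parent t)))
    (lc : T.D.τ → List S.G.V)
    (hlc : ∀ c, T.D.ChildOf c t → IsOrdering (lc c) (T.D.bag c ∩ T.D.bag t)) :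
    QA (Q ⊕ (QA Q le × List Bool)) (encRel le) where
  G := S.G.induce (T.D.bag t)
  γ0 := (encU S.und T t lt hlt lc hlc).γ0
  ι := {c : T.D.τ // T.D.ChildOf c t} ⊕ {i : S.ι // T.α i = t}
  mar := fun x => (encU S.und T t lt hlt lc hlc).mar x
  lab := fun x =>
    match x with
    | Sum.inl c => Sum.inr
        (branchQA S T c.1 (lc c.1)
          (fun v hv => (((hlc c.1 c.2).2 v).mp hv).1)
          ((hlc c.1 c.2).1),
         bseq S.und T c.1 (lc c.1))
    | Sum.inr i => Sum.inl (S.lab i.1)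
  φ := fun v => Sum.inl (S.φ v.1)

/-- `T` is an `N`-unimpeded rooted tree-decomposition of the assemblage `A`. -/
def Unimpeded (A : Asmb) (T : ATD A) (N : ℕ) : Prop :=
  ∀ t : Fin (N+1) → T.D.τ,
    (∀ j, t j ≠ T.D.root) →
    (∀ j : Fin N, IterAnc T.D.parent (t j.castSucc) (T.D.parent (t j.succ))) →
    (∀ j j', j ≠ j' →
      T.D.bag (T.D.parent (t j)) ∩ T.D.bag (t j) ≠
      T.D.bag (T.D.parent (t j')) ∩ T.D.bag (t j')) →
    (∀ j j', (T.D.bag (T.D.parent (t j)) ∩ T.D.bag (t j)).ncard =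
      (T.D.bag (T.D.parent (t j')) ∩ T.D.bag (t j')).ncard) →
    (∀ u, EdgeOnPathP T.D.parent (T.D.parent (t 0)) (t (Fin.last N)) u →
      (T.D.bag (T.D.parent (t 0)) ∩ T.D.bag (t 0)).ncard ≤
      (T.D.bag (T.D.parent u) ∩ T.D.bag u).ncard) →
    A.G.LinkedSets ((T.D.bag (T.D.parent (t 0)) ∩ T.D.bag (t 0)).ncard)
      (T.D.bag (T.D.parent (t 0)) ∩ T.D.bag (t 0))
      (T.D.bag (T.D.parent (t 1)) ∩ T.D.bag (t 1))

section Realizer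

/-- The nodes of the node-realizer: the original nodes, a subdivision node for every
edge of the tree (identified with its head), and a new root. -/
def RPos {G : MGraph} (D : RootedTD G) : Type := (D.τ ⊕ {t : D.τ // t ≠ D.root}) ⊕ Unit

/-- The parent function of the node-realizer. -/
def rparent {G : MGraph} (D : RootedTD G) : RPos D → RPos D
  | Sum.inl (Sum.inl t) =>
      if h : t = D.root then Sum.inr () else Sum.inl (Sum.inr ⟨t, h⟩)
  | Sum.inl (Sum.inr s) => Sum.inl (Sum.inl (D.parent s.1))
  | Sum.inr _ => Sum.inr ()

/-- The bags of the node-realizer. -/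
def rbag (A : Asmb) (T : ATD A) : RPos T.D → Set A.G.V
  | Sum.inl (Sum.inl t) => T.D.bag t
  | Sum.inl (Sum.inr s) => T.D.bag s.1 ∩ T.D.bag (T.D.parent s.1)
  | Sum.inr _ => {v | ∃ p ∈ A.γ0.1, p.1 = v}

/-- A node of the node-realizer corresponds to a `Γ`-pseudo-edge-cut modulo `Z`. -/
def corrGPEC (A : Asmb) (T : ATD A) (Z : Set A.G.V) : RPos T.D → Prop
  | Sum.inl (Sum.inr s) =>
      ∀ v ∈ (T.D.bag s.1 ∩ T.D.bag (T.D.parent s.1)) \ Z, essNum A T s.1 v ≠ 2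
  | _ => False

/-- The `Γ`-elevation of the node-realizer of `T` is at most `d`. -/
def GammaElevLE (A : Asmb) (T : ATD A) (d : ℕ) : Prop :=
  ∀ (Z : Set A.G.V) (s : ℕ), 0 < s → ∀ (h : ℕ) (t : Fin (h+1) → RPos T.D),
    IsStripGen (rparent T.D) (rbag A T) (corrGPEC A T Z) Z s t → h + 1 ≤ d

end Realizer

/-- `T` is a rooted tree-decomposition over the family `F` of assemblages. -/
def OverFam (A : Asmb) (T : ATD A) (F : Set Asmb) : Prop :=
  ∀ (t : T.D.τ) (lt : List A.G.V)
    (hlt : t ≠ T.D.root → IsOrdering lt (T.D.bag t ∩ T.D.bag (T.D.parent t)))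
    (lc : T.D.τ → List A.G.V)
    (hlc : ∀ c, T.D.ChildOf c t → IsOrdering (lc c) (T.D.bag c ∩ T.D.bag t)),
    encU A T t lt hlt lc hlc ∈ F

/-- The assemblage `(G, ∅, ∅)`. -/
def emptyAsmb (G : MGraph) : Asmb where
  G := G
  γ0 := ⟨[], by simp⟩
  ι := Empty
  mar := fun i => i.elim

end

/-!
Suppose no such `S` exists. Then for every infinite stable set `S` meeting each tree at most once,
the heads of the edges leaving `S` are not rich, so they contain an infinite stable set; keeping
one of its nodes per tree gives a set of the same kind lying one level deeper than `S`. Starting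
from the roots, `ℓ` such steps produce a node of depth at least `ℓ`, hence a directed path of
length `ℓ`.
-/

theorem StableIn.mono {V : Type} {D : SimpleGraph V} {S S' : Set V} (hS : StableIn D S)
    (hS' : S' ⊆ S) : StableIn D S' :=
  fun x hx y hy => hS x (hS' hx) y (hS' hy)

section PartialTransversal

variable {ι : Type} {α : ι → Type}

def IsStablePartialTransversal (D : SimpleGraph (Σ i, α i)) (S : Set (Σ i, α i)) : Prop :=
  S.Infinite ∧ StableIn D S ∧ ∀ i, {a : α i | (⟨i, a⟩ : Σ i, α i) ∈ S}.Subsingleton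

theorem Set.Infinite.image_sigma_fst [∀ i, Finite (α i)] {J : Set (Σ i, α i)}
    (hJ : J.Infinite) : (Sigma.fst '' J).Infinite := by
  have hfiber (i : ι) : (Sigma.fst ⁻¹' {i} : Set (Σ i, α i)).Finite :=
    (Set.finite_range (Sigma.mk i)).subset fun
      | ⟨_, a⟩, rfl => ⟨a, rfl⟩
  exact fun hfin =>
    hJ ((hfin.preimage' fun i _ => hfiber i).subset (Set.subset_preimage_image _ _))

theorem Set.Infinite.exists_subset_subsingleton_fibers [∀ i, Finite (α i)]
    {J : Set (Σ i, α i)} (hJ : J.Infinite) :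
    ∃ S ⊆ J, S.Infinite ∧
      ∀ i, {a : α i | (⟨i, a⟩ : Σ i, α i) ∈ S}.Subsingleton := by
  obtain ⟨x₀, -⟩ := hJ.nonempty
  have : Nonempty (Σ i, α i) := ⟨x₀⟩
  set g := Function.invFunOn Sigma.fst J
  have hg (i : ι) (hi : i ∈ Sigma.fst '' J) : g i ∈ J ∧ (g i).1 = i :=
    ⟨Function.invFunOn_mem hi, Function.invFunOn_eq hi⟩
  refine ⟨g '' (Sigma.fst '' J), ?_,
    hJ.image_sigma_fst.image (Function.invFunOn_injOn_image _ _), ?_⟩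
  · rintro _ ⟨i, hi, rfl⟩
    exact (hg i hi).1
  · rintro i a ⟨j, hj, hja⟩ b ⟨k, hk, hkb⟩
    obtain rfl : j = i := by rw [← (hg j hj).2, hja]
    obtain rfl : k = j := by rw [← (hg k hk).2, hkb]
    exact sigma_mk_injective (hja.symm.trans hkb)

theorem exists_stablePartialTransversal_subset_of_not_richIn [∀ i, Finite (α i)]
    {D : SimpleGraph (Σ i, α i)} {I : Set (Σ i, α i)} (hI : ¬ RichIn D I) :
    ∃ S ⊆ I, IsStablePartialTransversal D S := by
  simp only [RichIn, not_forall, not_not] at hI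
  obtain ⟨J, hJI, hJ, hJstable⟩ := hI
  obtain ⟨S, hSJ, hS, hfibers⟩ := hJ.exists_subset_subsingleton_fibers
  exact ⟨S, hSJ.trans hJI, hS, hJstable.mono hSJ, hfibers⟩

end PartialTransversal

namespace RTree

theorem hasDirPathLen_of_iterate_ne_root (T : RTree) {ℓ : ℕ} {v : T.V}
    (hv : ∀ j < ℓ, T.parent^[j] v ≠ T.root) : T.HasDirPathLen ℓ := by
  classical
  have hreach := T.reaches v
  have hroot : T.parent^[Nat.find hreach] v = T.root := Nat.find_spec hreach
  have hℓ : ℓ ≤ Nat.find hreach := not_lt.1 fun hlt => hv _ hlt hroot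
  -- the last `ℓ` edges of the path from `v` up to the root
  refine ⟨T.root, T.parent^[Nat.find hreach - ℓ] v, ?_, fun j hj => ?_⟩
  · rw [← Function.iterate_add_apply, Nat.add_sub_cancel' hℓ, hroot]
  · rw [← Function.iterate_add_apply]
    exact Nat.find_min hreach (by omega)

theorem iterate_ne_root_of_parent (T : RTree) {k : ℕ} {v : T.V} (hv : v ≠ T.root)
    (hpv : ∀ j < k, T.parent^[j] (T.parent v) ≠ T.root) :
    ∀ j < k + 1, T.parent^[j] v ≠ T.root
  | 0, _ => hv
  | j + 1, hj => by
    rw [Function.iterate_succ_apply]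
    exact hpv j (by omega)

end RTree

section Forest

variable {T : ℕ → RTree} {D : SimpleGraph (Σ i, (T i).V)}

def childSet (T : ℕ → RTree) (S : Set (Σ i, (T i).V)) : Set (Σ i, (T i).V) :=
  {x | x.2 ≠ (T x.1).root ∧ (⟨x.1, (T x.1).parent x.2⟩ : Σ i, (T i).V) ∈ S}

theorem isStablePartialTransversal_roots
    (hroots : StableIn D {x : Σ i, (T i).V | x.2 = (T x.1).root}) :
    IsStablePartialTransversal D {x : Σ i, (T i).V | x.2 = (T x.1).root} :=
  ⟨Set.infinite_of_injective_forall_mem (f := fun i => (⟨i, (T i).root⟩ : Σ i, (T i).V))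
      (fun _ _ h => congrArg Sigma.fst h) fun _ => rfl,
    hroots, fun _ _ ha _ hb => ha.trans hb.symm⟩

theorem exists_stablePartialTransversal_iterate_ne_root
    (hroots : StableIn D {x : Σ i, (T i).V | x.2 = (T x.1).root})
    (hnot : ∀ S, IsStablePartialTransversal D S → ¬ RichIn D (childSet T S)) (k : ℕ) :
    ∃ S, IsStablePartialTransversal D S ∧
      ∀ x ∈ S, ∀ j < k, (T x.1).parent^[j] x.2 ≠ (T x.1).root := by
  induction k with
  | zero =>
    exact ⟨_, isStablePartialTransversal_roots hroots,
      fun _ _ _ hj => absurd hj (Nat.not_lt_zero _)⟩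
  | succ k ih =>
    obtain ⟨S, hS, hdeep⟩ := ih
    obtain ⟨S', hS'S, hS'⟩ := exists_stablePartialTransversal_subset_of_not_richIn (hnot S hS)
    exact ⟨S', hS', fun x hx =>
      (T x.1).iterate_ne_root_of_parent (hS'S hx).1 (hdeep _ (hS'S hx).2)⟩

end Forest

theorem tree_lemma_bounded_height_general
    (T : ℕ → RTree)
    (D : SimpleGraph (Σ i : ℕ, (T i).V))
    (hroots : StableIn D {x : Σ i : ℕ, (T i).V | x.2 = (T x.1).root})
    (hheight : ∃ ℓ : ℕ, 0 < ℓ ∧ ∀ i : ℕ, ¬ (T i).HasDirPathLen ℓ) :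
    ∃ S : Set (Σ i : ℕ, (T i).V), S.Infinite ∧ StableIn D S ∧
      (∀ i : ℕ, {u : (T i).V | (⟨i, u⟩ : Σ i : ℕ, (T i).V) ∈ S}.Subsingleton) ∧
      RichIn D {x : Σ i : ℕ, (T i).V | x.2 ≠ (T x.1).root ∧
        (⟨x.1, (T x.1).parent x.2⟩ : Σ i : ℕ, (T i).V) ∈ S} := by
  obtain ⟨ℓ, -, hℓ⟩ := hheight
  by_contra hcon
  have hnot : ∀ S, IsStablePartialTransversal D S → ¬ RichIn D (childSet T S) :=
    fun S ⟨hinf, hstable, hfibers⟩ hrich => hcon ⟨S, hinf, hstable, hfibers, hrich⟩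
  obtain ⟨S, hS, hdeep⟩ := exists_stablePartialTransversal_iterate_ne_root hroots hnot ℓ
  obtain ⟨x, hx⟩ := hS.1.nonempty
  exact hℓ x.1 ((T x.1).hasDirPathLen_of_iterate_ne_root (hdeep x hx))

/-- Lemma 5.2: the decorated tree lemma for trees with no long directed path. -/
theorem tree_lemma_bounded_height {L : Type} (N h d : ℕ) (hd : 0 < d)
    (T : ℕ → RTree)
    (φ τm : ∀ i : ℕ, (T i).V → Finset L) (μ : ∀ i : ℕ, (T i).V → ℕ)
    (hdec : ∀ i : ℕ, Decorated (T i) (φ i) (τm i) (μ i) h d N)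
    (D : SimpleGraph (Σ i : ℕ, (T i).V))
    (hadj : ∀ (i i' : ℕ), i < i' → ∀ (u : (T i).V) (w v : (T i').V),
      D.Adj ⟨i, u⟩ ⟨i', w⟩ → Precedes (T i') (φ i') (τm i') (μ i') v w →
      D.Adj ⟨i, u⟩ ⟨i', v⟩)
    (hroots : StableIn D {x : Σ i : ℕ, (T i).V | x.2 = (T x.1).root})
    (hheight : ∃ ℓ : ℕ, 0 < ℓ ∧ ∀ i : ℕ, ¬ (T i).HasDirPathLen ℓ) :
    ∃ S : Set (Σ i : ℕ, (T i).V), S.Infinite ∧ StableIn D S ∧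
      (∀ i : ℕ, {u : (T i).V | (⟨i, u⟩ : Σ i : ℕ, (T i).V) ∈ S}.Subsingleton) ∧
      RichIn D {x : Σ i : ℕ, (T i).V | x.2 ≠ (T x.1).root ∧
        (⟨x.1, (T x.1).parent x.2⟩ : Σ i : ℕ, (T i).V) ∈ S} :=
  tree_lemma_bounded_height_general T D hroots hheight
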